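/- arXiv:2102.13415 — 5 statements merged into one kernel-verified Lean document; each statement's English description precedes it below -/
import Mathlib

section
/- For every α ∈ (0, 1/2] there exists a constant C > 0 such that for every integer M ≥ 2, every k ∈ {1, …, M−1} and every H : [0,1] → ℝ and K ≥ 0 satisfying sup_{x∈[0,1]} |H(x)| ≤ K and |H(x) − H(y)| ≤ K|x − y|^{2α} for all x, y ∈ [0,1], the Riemann-sum error of the k-th Fourier sine coefficient satisfies |⟨H, e_k⟩_M − h_k| ≤ C·K·k^{2α}·M^{−2α}. -/
/-!
Since `e_k(0) = 0`, the discrete inner product is the left Riemann sum of `f = H · e_k` on the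
uniform grid of mesh `1/M`, and comparing `f` on each cell with its value at the left endpoint
bounds the error by the oscillation of `f` over distances `≤ 1/M`. That oscillation is at most
`√2 (π + 1) K (k/M)^{2α}`: the Hölder bound controls `H`, and `e_k` is `√2 π k`-Lipschitz, which
costs `√2 π K k/M ≤ √2 π K (k/M)^{2α}` because `k/M ≤ 1` and `2α ≤ 1`.
-/

open Real

/-- The sine basis functions `e_ℓ(y) = √2 sin(πℓy)`. -/
noncomputable def sineB (ℓ : ℕ) (y : ℝ) : ℝ := Real.sqrt 2 * Real.sin (Real.pi * ℓ * y)

/-- The Fourier sine coefficients `h_ℓ = ∫₀¹ H(y) e_ℓ(y) dy`. -/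
noncomputable def fourierSineCoef (H : ℝ → ℝ) (ℓ : ℕ) : ℝ :=
  ∫ y in (0 : ℝ)..1, H y * sineB ℓ y

/-- The discrete inner product `⟨H, e_k⟩_M = (1/M) ∑_{l=1}^{M−1} H(l/M) e_k(l/M)`. -/
noncomputable def discIP (M : ℕ) (H : ℝ → ℝ) (k : ℕ) : ℝ :=
  (1 / (M : ℝ)) * ∑ l ∈ Finset.Icc 1 (M - 1), H ((l : ℝ) / M) * sineB k ((l : ℝ) / M)

open Set Filter Topology

theorem ContinuousOn.of_dist_le_mul_rpow {X Y : Type*} [PseudoMetricSpace X] [PseudoMetricSpace Y]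
    {f : X → Y} {s : Set X} {K β : ℝ} (hβ : 0 < β)
    (hf : ∀ x ∈ s, ∀ y ∈ s, dist (f x) (f y) ≤ K * dist x y ^ β) : ContinuousOn f s := by
  intro x hx
  rw [ContinuousWithinAt, tendsto_iff_dist_tendsto_zero]
  have hlim : Tendsto (fun y => K * dist y x ^ β) (𝓝[s] x) (𝓝 0) := by
    have : Tendsto (fun y => K * dist y x ^ β) (𝓝 x) (𝓝 (K * dist x x ^ β)) :=
      ((continuous_id.dist continuous_const).rpow_const fun _ => Or.inr hβ.le).tendsto x
        |>.const_mul K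
    rw [dist_self, zero_rpow hβ.ne', mul_zero] at this
    exact this.mono_left nhdsWithin_le_nhds
  refine squeeze_zero' (Eventually.of_forall fun _ => dist_nonneg) ?_ hlim
  filter_upwards [self_mem_nhdsWithin] with y hy using hf y hy x hx

section RiemannSum

variable {E : Type*} [NormedAddCommGroup E] [NormedSpace ℝ E] [CompleteSpace E]

theorem norm_smul_sub_integral_le {f : ℝ → E} {a b B : ℝ} (hab : a ≤ b)
    (hf : IntervalIntegrable f MeasureTheory.volume a b) (hB : ∀ y ∈ Ioc a b, ‖f a - f y‖ ≤ B) :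
    ‖(b - a) • f a - ∫ y in a..b, f y‖ ≤ B * (b - a) := by
  rw [← intervalIntegral.integral_const,
    ← intervalIntegral.integral_sub intervalIntegrable_const hf]
  calc ‖∫ y in a..b, (f a - f y)‖ ≤ B * |b - a| :=
        intervalIntegral.norm_integral_le_of_norm_le_const fun y hy =>
          hB y (by rwa [uIoc_of_le hab] at hy)
    _ = B * (b - a) := by rw [abs_of_nonneg (sub_nonneg.mpr hab)]

theorem norm_leftRiemannSum_sub_integral_le {f : ℝ → E} {M : ℕ} {B : ℝ} (hM : 0 < M)
    (hf : IntervalIntegrable f MeasureTheory.volume 0 1)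
    (hosc : ∀ x ∈ Icc (0 : ℝ) 1, ∀ y ∈ Icc (0 : ℝ) 1, |x - y| ≤ 1 / M → ‖f x - f y‖ ≤ B) :
    ‖(M : ℝ)⁻¹ • ∑ i ∈ Finset.range M, f (i / M) - ∫ y in (0 : ℝ)..1, f y‖ ≤ B := by
  set node : ℕ → ℝ := fun i => i / M
  have hMR : (0 : ℝ) < M := Nat.cast_pos.mpr hM
  have hstep (i : ℕ) : node (i + 1) - node i = (M : ℝ)⁻¹ := by
    simp only [node]; push_cast; field_simp; ring
  have hnode_mem {i : ℕ} (hi : i ≤ M) : node i ∈ Icc (0 : ℝ) 1 :=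
    ⟨by positivity, div_le_one_of_le₀ (by exact_mod_cast hi) hMR.le⟩
  have hcell {i : ℕ} (hi : i < M) : Icc (node i) (node (i + 1)) ⊆ Icc 0 1 :=
    Icc_subset_Icc (hnode_mem hi.le).1 (hnode_mem hi).2
  have hle (i : ℕ) : node i ≤ node (i + 1) := by linarith [hstep i, inv_pos.mpr hMR]
  have hint {i : ℕ} (hi : i < M) :
      IntervalIntegrable f MeasureTheory.volume (node i) (node (i + 1)) :=
    hf.mono_set (by rw [uIcc_of_le (hle i), uIcc_of_le zero_le_one]; exact hcell hi)
  have hsplit :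
      ∫ y in (0 : ℝ)..1, f y = ∑ i ∈ Finset.range M, ∫ y in node i..node (i + 1), f y := by
    rw [intervalIntegral.sum_integral_adjacent_intervals (a := node) fun i hi => hint hi]
    simp [node, hMR.ne']
  have hterm {i : ℕ} (hi : i < M) :
      ‖(M : ℝ)⁻¹ • f (node i) - ∫ y in node i..node (i + 1), f y‖ ≤ B * (M : ℝ)⁻¹ := by
    rw [← hstep i]
    refine norm_smul_sub_integral_le (hle i) (hint hi) fun y hy => hosc _ (hnode_mem hi.le) _
      (hcell hi (Ioc_subset_Icc_self hy)) ?_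
    rw [abs_sub_comm, abs_of_nonneg (by linarith [hy.1]), one_div, ← hstep i]
    linarith [hy.2]
  calc ‖(M : ℝ)⁻¹ • ∑ i ∈ Finset.range M, f (node i) - ∫ y in (0 : ℝ)..1, f y‖
      = ‖∑ i ∈ Finset.range M, ((M : ℝ)⁻¹ • f (node i) - ∫ y in node i..node (i + 1), f y)‖ := by
        rw [hsplit, Finset.smul_sum, Finset.sum_sub_distrib]
    _ ≤ ∑ _i ∈ Finset.range M, B * (M : ℝ)⁻¹ :=
        norm_sum_le_of_le _ fun i hi => hterm (Finset.mem_range.mp hi)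
    _ = B := by rw [Finset.sum_const, Finset.card_range, nsmul_eq_mul]; field_simp

end RiemannSum

theorem sineB_zero_right (k : ℕ) : sineB k 0 = 0 := by simp [sineB]

theorem continuous_sineB (k : ℕ) : Continuous (sineB k) := by unfold sineB; fun_prop

theorem abs_sineB_le (k : ℕ) (y : ℝ) : |sineB k y| ≤ √2 := by
  rw [sineB, abs_mul, abs_of_nonneg (sqrt_nonneg 2)]
  exact mul_le_of_le_one_right (sqrt_nonneg 2) (abs_sin_le_one _)

theorem abs_sineB_sub_sineB_le (k : ℕ) (x y : ℝ) :
    |sineB k x - sineB k y| ≤ √2 * (π * k * |x - y|) := by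
  rw [sineB, sineB, ← mul_sub, abs_mul, abs_of_nonneg (sqrt_nonneg 2)]
  gcongr
  calc |sin (π * k * x) - sin (π * k * y)| ≤ |π * k * x - π * k * y| := abs_sin_sub_sin_le _ _
    _ = π * k * |x - y| := by rw [← mul_sub, abs_mul, abs_of_nonneg (by positivity)]

theorem discIP_eq_leftRiemannSum {M : ℕ} (hM : 0 < M) (H : ℝ → ℝ) (k : ℕ) :
    discIP M H k = (M : ℝ)⁻¹ * ∑ i ∈ Finset.range M, H (i / M) * sineB k (i / M) := by
  rw [discIP, one_div, Finset.range_eq_Ico, Finset.sum_eq_sum_Ico_succ_bot hM,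
    Finset.Icc_sub_one_right_eq_Ico_of_not_isMin (by simpa using hM.ne')]
  simp [sineB_zero_right]

theorem abs_mul_sineB_sub_mul_sineB_le {H : ℝ → ℝ} {K β δ : ℝ} {k : ℕ} {x y : ℝ}
    (hβ0 : 0 ≤ β) (hβ1 : β ≤ 1) (hk : 1 ≤ k)
    (hbd : ∀ x ∈ Icc (0 : ℝ) 1, |H x| ≤ K)
    (hHol : ∀ x ∈ Icc (0 : ℝ) 1, ∀ y ∈ Icc (0 : ℝ) 1, |H x - H y| ≤ K * |x - y| ^ β)
    (hx : x ∈ Icc (0 : ℝ) 1) (hy : y ∈ Icc (0 : ℝ) 1) (hxy : |x - y| ≤ δ) (hkδ : k * δ ≤ 1) :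
    |H x * sineB k x - H y * sineB k y| ≤ √2 * (π + 1) * K * (k * δ) ^ β := by
  have hK : 0 ≤ K := (abs_nonneg _).trans (hbd x hx)
  have hxy' : |x - y| ≤ k * δ :=
    hxy.trans (le_mul_of_one_le_left ((abs_nonneg _).trans hxy) (by exact_mod_cast hk))
  have hsine : π * k * |x - y| ≤ π * (k * δ) ^ β := by
    rw [mul_assoc]
    gcongr
    calc (k : ℝ) * |x - y| ≤ k * δ := by gcongr
      _ ≤ (k * δ) ^ β := self_le_rpow_of_le_one ((abs_nonneg _).trans hxy') hkδ hβ1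
  have hH : |H x - H y| ≤ K * (k * δ) ^ β :=
    (hHol x hx y hy).trans (by gcongr)
  calc |H x * sineB k x - H y * sineB k y|
      = |H x * (sineB k x - sineB k y) + (H x - H y) * sineB k y| := by ring_nf
    _ ≤ |H x| * |sineB k x - sineB k y| + |H x - H y| * |sineB k y| := by
        rw [← abs_mul, ← abs_mul]; exact abs_add_le _ _
    _ ≤ K * (√2 * (π * (k * δ) ^ β)) + K * (k * δ) ^ β * √2 := by
        refine add_le_add (mul_le_mul (hbd x hx) ?_ (abs_nonneg _) hK)
          (mul_le_mul hH (abs_sineB_le k y) (abs_nonneg _) ((abs_nonneg _).trans hH))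
        exact (abs_sineB_sub_sineB_le k x y).trans (by gcongr)
    _ = √2 * (π + 1) * K * (k * δ) ^ β := by ring

/-- For every `α ∈ (0,1/2]` there is a constant `C` such that for every `M ≥ 2`,
`k ∈ {1,…,M−1}` and every `H : [0,1] → ℝ` with `‖H‖_∞ ≤ K` and `2α`-Hölder constant `≤ K`,
the Riemann-sum error of the `k`-th Fourier sine coefficient satisfies
`|⟨H, e_k⟩_M − h_k| ≤ C K k^{2α} M^{−2α}`. -/
theorem riemann_sum_error_fourier_coefficient (α : ℝ) (hα : α ∈ Set.Ioc (0 : ℝ) (1 / 2)) :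
    ∃ C > (0 : ℝ), ∀ (M : ℕ), 2 ≤ M → ∀ k ∈ Finset.Icc 1 (M - 1),
      ∀ (H : ℝ → ℝ) (K : ℝ), 0 ≤ K →
      (∀ x ∈ Set.Icc (0 : ℝ) 1, |H x| ≤ K) →
      (∀ x ∈ Set.Icc (0 : ℝ) 1, ∀ y ∈ Set.Icc (0 : ℝ) 1,
        |H x - H y| ≤ K * |x - y| ^ (2 * α)) →
      |discIP M H k - fourierSineCoef H k| ≤ C * K * (k : ℝ) ^ (2 * α) * (M : ℝ) ^ (-(2 * α)) := by
  obtain ⟨hα0, hα1⟩ := hα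
  refine ⟨√2 * (π + 1), by positivity, fun M hM k hk H K _ hbd hHol => ?_⟩
  obtain ⟨hk1, hkM⟩ := Finset.mem_Icc.mp hk
  have hMR : (0 : ℝ) < M := by positivity
  have hkδ : (k : ℝ) * (1 / M) ≤ 1 := by
    rw [mul_one_div, div_le_one hMR]; exact_mod_cast (by omega : k ≤ M)
  have hcont : ContinuousOn (fun y => H y * sineB k y) (Icc 0 1) :=
    (ContinuousOn.of_dist_le_mul_rpow (by linarith) hHol).mul (continuous_sineB k).continuousOn
  have hbound := norm_leftRiemannSum_sub_integral_le (by omega)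
    (hcont.intervalIntegrable_of_Icc zero_le_one) fun x hx y hy hxy =>
      abs_mul_sineB_sub_mul_sineB_le (by linarith) (by linarith) hk1 hbd hHol hx hy hxy hkδ
  rw [discIP_eq_leftRiemannSum (by omega), fourierSineCoef]
  convert hbound using 1
  · rw [Real.norm_eq_abs, smul_eq_mul]
  · rw [mul_one_div, div_rpow (by positivity) hMR.le, rpow_neg hMR.le]
    ring
end

section
/- For every ϑ > 0 there exist constants c, C > 0 such that for all h ∈ (0, 1]: c·√h ≤ ∑_{ℓ=1}^{∞} (1 − e^{−ϑπ²ℓ²h}) / (ϑπ²ℓ²) ≤ C·√h. -/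
/-!
The elementary bounds `(1 - e⁻¹) min(t, 1) ≤ 1 - e^{-t} ≤ min(t, 1)` make the `ℓ`-th term
comparable to `min(h, 1/(aℓ²)) = a⁻¹ min(x⁻², ℓ⁻²)`, where `x = (ah)^{-1/2}` marks the mode at
which the increment saturates, and `min(x⁻², ℓ⁻²)` lies between `(ℓ + x)⁻²` and `4 (ℓ + x)⁻²`.
Comparing with the telescoping series of `1/(ℓ + x) - 1/(ℓ + 1 + x)` puts `∑_{ℓ ≥ 1} (ℓ + x)⁻²`
between `1/(1 + x)` and `1/x`, that is between `√(ah)/(√(ah) + 1)` and `√(ah)`.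
-/

open Real Filter Topology

namespace StochasticHeat

lemma one_sub_exp_neg_one_pos : 0 < 1 - exp (-1) :=
  sub_pos.2 (exp_lt_one_iff.2 neg_one_lt_zero)

lemma one_sub_exp_neg_mul_div_le_min {b : ℝ} (hb : 0 < b) (h : ℝ) :
    (1 - exp (-(b * h))) / b ≤ min h (1 / b) := by
  have hbh : b * h / b = h := by field_simp
  calc (1 - exp (-(b * h))) / b ≤ min (b * h) 1 / b := by
        gcongr
        exact le_min (by linarith [add_one_le_exp (-(b * h))]) (by linarith [exp_pos (-(b * h))])
    _ = min h (1 / b) := by rw [← min_div_div_right hb.le, hbh]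

lemma mul_min_le_one_sub_exp_neg {t : ℝ} (ht : 0 ≤ t) :
    (1 - exp (-1)) * min t 1 ≤ 1 - exp (-t) := by
  rcases le_total t 1 with ht1 | ht1
  · rw [min_eq_left ht1]
    have hconv := convexOn_exp.2 (Set.mem_univ (-1)) (Set.mem_univ 0) ht (sub_nonneg.2 ht1)
      (add_sub_cancel t 1)
    simp only [smul_eq_mul, mul_neg, mul_one, mul_zero, add_zero, exp_zero] at hconv
    linarith
  · rw [min_eq_right ht1, mul_one]
    gcongr

lemma mul_min_le_one_sub_exp_neg_mul_div {b h : ℝ} (hb : 0 < b) (hh : 0 ≤ h) :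
    (1 - exp (-1)) * min h (1 / b) ≤ (1 - exp (-(b * h))) / b := by
  have hbh : b * h / b = h := by field_simp
  calc (1 - exp (-1)) * min h (1 / b) = (1 - exp (-1)) * min (b * h) 1 / b := by
        rw [mul_div_assoc, ← min_div_div_right hb.le, hbh]
    _ ≤ (1 - exp (-(b * h))) / b := by
        gcongr
        exact mul_min_le_one_sub_exp_neg (by positivity)

lemma one_div_add_sq_le_min {x n : ℝ} (hx : 0 < x) (hn : 0 < n) :
    1 / (n + x) ^ 2 ≤ min (1 / x ^ 2) (1 / n ^ 2) :=
  le_min (by gcongr; linarith) (by gcongr; linarith)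

lemma min_le_four_div_add_sq {x n : ℝ} (hx : 0 < x) (hn : 0 < n) :
    min (1 / x ^ 2) (1 / n ^ 2) ≤ 4 / (n + x) ^ 2 := by
  rcases le_total n x with hnx | hxn
  · calc min (1 / x ^ 2) (1 / n ^ 2) ≤ 1 / x ^ 2 := min_le_left _ _
      _ = 4 / (x + x) ^ 2 := by field_simp; ring
      _ ≤ 4 / (n + x) ^ 2 := by gcongr
  · calc min (1 / x ^ 2) (1 / n ^ 2) ≤ 1 / n ^ 2 := min_le_right _ _
      _ = 4 / (n + n) ^ 2 := by field_simp; ring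
      _ ≤ 4 / (n + x) ^ 2 := by gcongr

lemma hasSum_sub_succ_of_antitone {u : ℕ → ℝ} (hu : Antitone u)
    (hlim : Tendsto u atTop (𝓝 0)) : HasSum (fun n ↦ u n - u (n + 1)) (u 0) := by
  rw [hasSum_iff_tendsto_nat_of_nonneg (fun n ↦ sub_nonneg.2 (hu n.le_succ))]
  simp only [Finset.sum_range_sub']
  simpa using (tendsto_const_nhds (x := u 0)).sub hlim

lemma hasSum_one_div_add_sub {x : ℝ} (hx : 0 < x) :
    HasSum (fun n : ℕ ↦ 1 / ((n : ℝ) + x) - 1 / ((n : ℝ) + 1 + x)) (1 / x) := by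
  have hu : Antitone (fun n : ℕ ↦ 1 / ((n : ℝ) + x)) := fun m n hmn ↦ by
    dsimp only
    gcongr
  have hlim : Tendsto (fun n : ℕ ↦ 1 / ((n : ℝ) + x)) atTop (𝓝 0) :=
    tendsto_const_nhds.div_atTop (tendsto_atTop_add_const_right _ x tendsto_natCast_atTop_atTop)
  simpa using hasSum_sub_succ_of_antitone hu hlim

lemma one_div_add_sq_le_sub {x : ℝ} (hx : 0 < x) (n : ℕ) :
    1 / ((n : ℝ) + 1 + x) ^ 2 ≤ 1 / ((n : ℝ) + x) - 1 / ((n : ℝ) + 1 + x) := by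
  have hpos : 0 < (n : ℝ) + x := by positivity
  rw [div_sub_div _ _ hpos.ne' (by positivity)]
  gcongr <;> nlinarith

lemma sub_le_one_div_add_sq {x : ℝ} (hx : 0 ≤ x) (n : ℕ) :
    1 / ((n : ℝ) + (1 + x)) - 1 / ((n : ℝ) + 1 + (1 + x)) ≤ 1 / ((n : ℝ) + 1 + x) ^ 2 := by
  rw [div_sub_div _ _ (by positivity) (by positivity)]
  gcongr <;> nlinarith

lemma summable_one_div_add_sq {x : ℝ} (hx : 0 < x) :
    Summable (fun n : ℕ ↦ 1 / ((n : ℝ) + 1 + x) ^ 2) :=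
  (hasSum_one_div_add_sub hx).summable.of_nonneg_of_le (fun _ ↦ by positivity)
    (one_div_add_sq_le_sub hx)

lemma tsum_one_div_add_sq_le {x : ℝ} (hx : 0 < x) :
    ∑' n : ℕ, 1 / ((n : ℝ) + 1 + x) ^ 2 ≤ 1 / x :=
  hasSum_le (one_div_add_sq_le_sub hx) (summable_one_div_add_sq hx).hasSum
    (hasSum_one_div_add_sub hx)

lemma one_div_one_add_le_tsum {x : ℝ} (hx : 0 < x) :
    1 / (1 + x) ≤ ∑' n : ℕ, 1 / ((n : ℝ) + 1 + x) ^ 2 :=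
  hasSum_le (sub_le_one_div_add_sq hx.le) (hasSum_one_div_add_sub (by positivity))
    (summable_one_div_add_sq hx).hasSum

lemma min_eq_mul_min_inv_sqrt {a h : ℝ} (ha : 0 < a) (hh : 0 < h) (n : ℝ) :
    min h (1 / (a * n ^ 2)) = 1 / a * min (1 / (√(a * h))⁻¹ ^ 2) (1 / n ^ 2) := by
  rw [one_div (_ ^ 2), inv_pow, inv_inv, sq_sqrt (by positivity),
    mul_min_of_nonneg _ _ (by positivity)]
  congr 1 <;> field_simp

variable {a h : ℝ}

lemma one_sub_exp_div_le (ha : 0 < a) (hh : 0 < h) {n : ℝ} (hn : 0 < n) :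
    (1 - exp (-(a * n ^ 2 * h))) / (a * n ^ 2) ≤ 4 / a * (1 / (n + (√(a * h))⁻¹) ^ 2) := by
  have hx : 0 < (√(a * h))⁻¹ := by positivity
  calc (1 - exp (-(a * n ^ 2 * h))) / (a * n ^ 2) ≤ min h (1 / (a * n ^ 2)) :=
        one_sub_exp_neg_mul_div_le_min (by positivity) h
    _ = 1 / a * min (1 / (√(a * h))⁻¹ ^ 2) (1 / n ^ 2) := min_eq_mul_min_inv_sqrt ha hh n
    _ ≤ 1 / a * (4 / (n + (√(a * h))⁻¹) ^ 2) := by gcongr; exact min_le_four_div_add_sq hx hn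
    _ = 4 / a * (1 / (n + (√(a * h))⁻¹) ^ 2) := by ring

lemma le_one_sub_exp_div (ha : 0 < a) (hh : 0 < h) {n : ℝ} (hn : 0 < n) :
    (1 - exp (-1)) / a * (1 / (n + (√(a * h))⁻¹) ^ 2)
      ≤ (1 - exp (-(a * n ^ 2 * h))) / (a * n ^ 2) := by
  have hx : 0 < (√(a * h))⁻¹ := by positivity
  have he := one_sub_exp_neg_one_pos.le
  calc (1 - exp (-1)) / a * (1 / (n + (√(a * h))⁻¹) ^ 2)
        ≤ (1 - exp (-1)) * (1 / a * min (1 / (√(a * h))⁻¹ ^ 2) (1 / n ^ 2)) := by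
          rw [div_eq_mul_one_div _ a, mul_assoc]
          gcongr
          exact one_div_add_sq_le_min hx hn
    _ = (1 - exp (-1)) * min h (1 / (a * n ^ 2)) := by rw [min_eq_mul_min_inv_sqrt ha hh n]
    _ ≤ (1 - exp (-(a * n ^ 2 * h))) / (a * n ^ 2) :=
        mul_min_le_one_sub_exp_neg_mul_div (by positivity) hh.le

noncomputable def incrementVariance (a h : ℝ) : ℝ :=
  ∑' ℓ : ℕ, (1 - exp (-(a * ((ℓ : ℝ) + 1) ^ 2 * h))) / (a * ((ℓ : ℝ) + 1) ^ 2)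

lemma summable_one_sub_exp_div (ha : 0 < a) (hh : 0 < h) :
    Summable (fun ℓ : ℕ ↦ (1 - exp (-(a * ((ℓ : ℝ) + 1) ^ 2 * h))) / (a * ((ℓ : ℝ) + 1) ^ 2)) :=
  ((summable_one_div_add_sq (by positivity)).mul_left (4 / a)).of_nonneg_of_le
    (fun ℓ ↦ le_trans (by have := one_sub_exp_neg_one_pos; positivity)
      (le_one_sub_exp_div ha hh (by positivity)))
    (fun ℓ ↦ one_sub_exp_div_le ha hh (by positivity))

lemma incrementVariance_le (ha : 0 < a) (hh : 0 < h) :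
    incrementVariance a h ≤ 4 / √a * √h := by
  have hx : 0 < (√(a * h))⁻¹ := by positivity
  calc incrementVariance a h
        ≤ ∑' ℓ : ℕ, 4 / a * (1 / ((ℓ : ℝ) + 1 + (√(a * h))⁻¹) ^ 2) :=
          (summable_one_sub_exp_div ha hh).tsum_le_tsum
            (fun ℓ ↦ one_sub_exp_div_le ha hh (by positivity))
            ((summable_one_div_add_sq hx).mul_left _)
    _ = 4 / a * ∑' ℓ : ℕ, 1 / ((ℓ : ℝ) + 1 + (√(a * h))⁻¹) ^ 2 := tsum_mul_left
    _ ≤ 4 / a * (1 / (√(a * h))⁻¹) := by gcongr; exact tsum_one_div_add_sq_le hx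
    _ = 4 / √a * √h := by
        rw [one_div, inv_inv, sqrt_mul ha.le]
        nth_rw 1 [← sq_sqrt ha.le]
        field_simp

lemma le_incrementVariance (ha : 0 < a) (hh : 0 < h) :
    (1 - exp (-1)) / a * (√(a * h) / (√(a * h) + 1)) ≤ incrementVariance a h := by
  have hx : 0 < (√(a * h))⁻¹ := by positivity
  calc (1 - exp (-1)) / a * (√(a * h) / (√(a * h) + 1))
        = (1 - exp (-1)) / a * (1 / (1 + (√(a * h))⁻¹)) := by
          have : 0 < √(a * h) := by positivity
          field_simp
    _ ≤ (1 - exp (-1)) / a * ∑' ℓ : ℕ, 1 / ((ℓ : ℝ) + 1 + (√(a * h))⁻¹) ^ 2 := by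
        have := one_sub_exp_neg_one_pos
        gcongr
        exact one_div_one_add_le_tsum hx
    _ = ∑' ℓ : ℕ, (1 - exp (-1)) / a * (1 / ((ℓ : ℝ) + 1 + (√(a * h))⁻¹) ^ 2) :=
        tsum_mul_left.symm
    _ ≤ incrementVariance a h :=
        ((summable_one_div_add_sq hx).mul_left _).tsum_le_tsum
          (fun ℓ ↦ le_one_sub_exp_div ha hh (by positivity)) (summable_one_sub_exp_div ha hh)

end StochasticHeat

open StochasticHeat

/-- Temporal variance bound for the stationary stochastic heat equation: for every `ϑ > 0`
there are constants `c, C > 0` such that for all `h ∈ (0,1]`,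
`c √h ≤ ∑_{ℓ≥1} (1 − e^{−ϑπ²ℓ²h})/(ϑπ²ℓ²) ≤ C √h`. -/
theorem temporal_variance_bound (ϑ : ℝ) (hϑ : 0 < ϑ) :
    ∃ c > (0 : ℝ), ∃ C > (0 : ℝ), ∀ h ∈ Set.Ioc (0 : ℝ) 1,
      c * Real.sqrt h
          ≤ (∑' ℓ : ℕ, (1 - Real.exp (-(ϑ * π ^ 2 * ((ℓ : ℝ) + 1) ^ 2 * h)))
              / (ϑ * π ^ 2 * ((ℓ : ℝ) + 1) ^ 2))
        ∧ (∑' ℓ : ℕ, (1 - Real.exp (-(ϑ * π ^ 2 * ((ℓ : ℝ) + 1) ^ 2 * h)))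
              / (ϑ * π ^ 2 * ((ℓ : ℝ) + 1) ^ 2)) ≤ C * Real.sqrt h := by
  set a := ϑ * π ^ 2
  have ha : 0 < a := by positivity
  have he := one_sub_exp_neg_one_pos
  refine ⟨(1 - exp (-1)) / a * (√a / (√a + 1)), by positivity, 4 / √a, by positivity,
    fun h ⟨hh, hh1⟩ ↦ ⟨?_, incrementVariance_le ha hh⟩⟩
  have hah : √(a * h) ≤ √a := sqrt_le_sqrt (mul_le_of_le_one_right ha.le hh1)
  calc (1 - exp (-1)) / a * (√a / (√a + 1)) * √h
        = (1 - exp (-1)) / a * (√(a * h) / (√a + 1)) := by rw [sqrt_mul ha.le]; ring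
    _ ≤ (1 - exp (-1)) / a * (√(a * h) / (√(a * h) + 1)) := by gcongr
    _ ≤ _ := le_incrementVariance ha hh
end

section
/- Let ϑ > 0 and b ∈ (0, 1/2). There exists a constant C > 0 such that for all t > 0 and all x, y ∈ [b, 1−b]: |∑_{ℓ=0}^{∞} e^{−ϑπ²(2ℓ+1)²t} · (sin(π(2ℓ+1)x) − sin(π(2ℓ+1)y)) / (2ℓ+1)| ≤ C·|x − y|. -/
/-!
Write the series as `f(x) - f(y)` with `f(x) = ∑ aₗ sin(π(2ℓ+1)x)/(2ℓ+1)` and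
`aₗ = e^{-ϑπ²(2ℓ+1)²t}`. Termwise differentiation gives `f' = π ∑ aₗ cos(π(2ℓ+1)x)`, and the
partial sums of `∑ cos(π(2ℓ+1)x)` equal `sin(2Nπx) / (2 sin(πx))`, hence are bounded by
`1 / (2 sin(πb))` on `[b, 1-b]`. Since `aₗ` decreases from `a₀ ≤ 1`, Abel summation bounds `|f'|`
there by `π / (2 sin(πb))` uniformly in `t`, and the mean value inequality concludes.
-/

open Real Finset

section Abel

variable {E : Type*} [NormedAddCommGroup E] [NormedSpace ℝ E]
  {e : ℕ → ℝ} {g : ℕ → E} {B : ℝ}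

theorem norm_sum_range_smul_le_of_antitone (he : Antitone e) (he0 : ∀ i, 0 ≤ e i)
    (hg : ∀ n, ‖∑ i ∈ range n, g i‖ ≤ B) (n : ℕ) :
    ‖∑ i ∈ range n, e i • g i‖ ≤ B * e 0 := by
  have step (i : ℕ) : 0 ≤ e i - e (i + 1) := sub_nonneg.2 (he i.le_succ)
  rw [sum_range_by_parts]
  calc ‖e (n - 1) • ∑ i ∈ range n, g i
          - ∑ i ∈ range (n - 1), (e (i + 1) - e i) • ∑ j ∈ range (i + 1), g j‖
      ≤ ‖e (n - 1) • ∑ i ∈ range n, g i‖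
          + ∑ i ∈ range (n - 1), ‖(e i - e (i + 1)) • ∑ j ∈ range (i + 1), g j‖ := by
        refine (norm_sub_le _ _).trans (add_le_add_right (norm_sum_le_of_le _ fun i _ => ?_) _)
        rw [← neg_sub, neg_smul, norm_neg]
    _ ≤ e (n - 1) * B + ∑ i ∈ range (n - 1), (e i - e (i + 1)) * B := by
        simp only [norm_smul, Real.norm_of_nonneg (he0 _), Real.norm_of_nonneg (step _)]
        gcongr
        · exact he0 _
        · exact hg _
        · exact step _
        · exact hg _
    _ = B * e 0 := by
        rw [← sum_mul, sum_range_sub' e]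
        ring

theorem norm_tsum_smul_le_of_antitone (he : Antitone e) (he0 : ∀ i, 0 ≤ e i)
    (hg : ∀ n, ‖∑ i ∈ range n, g i‖ ≤ B) (hs : Summable fun i => e i • g i) :
    ‖∑' i, e i • g i‖ ≤ B * e 0 :=
  le_of_tendsto hs.hasSum.tendsto_sum_nat.norm
    (Filter.Eventually.of_forall (norm_sum_range_smul_le_of_antitone he he0 hg))

end Abel

theorem two_sin_mul_sum_range_cos_odd_mul (θ : ℝ) (N : ℕ) :
    2 * sin θ * ∑ ℓ ∈ range N, cos ((2 * ℓ + 1) * θ) = sin (2 * N * θ) := by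
  induction N with
  | zero => simp
  | succ n ih =>
    have telescope := sin_sub_sin (2 * (n + 1) * θ) (2 * n * θ)
    rw [show (2 * (n + 1) * θ - 2 * n * θ) / 2 = θ by ring,
      show (2 * (n + 1) * θ + 2 * n * θ) / 2 = (2 * n + 1) * θ by ring] at telescope
    rw [sum_range_succ, mul_add, ih]
    push_cast
    linarith

theorem abs_sum_range_cos_odd_mul_le {θ : ℝ} (hθ : 0 < sin θ) (N : ℕ) :
    |∑ ℓ ∈ range N, cos ((2 * ℓ + 1) * θ)| ≤ 1 / (2 * sin θ) := by
  rw [le_div_iff₀ (by positivity), mul_comm, ← abs_of_pos (by positivity : 0 < 2 * sin θ),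
    ← abs_mul, two_sin_mul_sum_range_cos_odd_mul]
  exact abs_sin_le_one _

theorem sin_pi_mul_le_sin_pi_mul {b x : ℝ} (hb : -(1 / 2) ≤ b) (hx : x ∈ Set.Icc b (1 - b)) :
    sin (π * b) ≤ sin (π * x) := by
  have mono : ∀ z ∈ Set.Icc b (1 / 2), sin (π * b) ≤ sin (π * z) := fun z hz =>
    sin_le_sin_of_le_of_le_pi_div_two (by nlinarith [pi_pos]) (by nlinarith [pi_pos, hz.2])
      (by nlinarith [pi_pos, hz.1])
  rcases le_total x (1 / 2) with hx2 | hx2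
  · exact mono x ⟨hx.1, hx2⟩
  · rw [← sin_pi_sub (π * x), show π - π * x = π * (1 - x) by ring]
    exact mono (1 - x) ⟨by linarith [hx.2], by linarith⟩

noncomputable def oddSineSeries (a : ℕ → ℝ) (x : ℝ) : ℝ :=
  ∑' ℓ : ℕ, a ℓ * sin (π * (2 * ℓ + 1) * x) / (2 * ℓ + 1)

section OddSineSeries

variable {a : ℕ → ℝ}

theorem summable_oddSineSeries_term (ha : Summable a) (x : ℝ) :
    Summable fun ℓ : ℕ => a ℓ * sin (π * (2 * ℓ + 1) * x) / (2 * ℓ + 1) := by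
  refine ha.abs.of_norm_bounded fun ℓ => ?_
  have hodd : (1 : ℝ) ≤ 2 * ℓ + 1 := by linarith [ℓ.cast_nonneg (α := ℝ)]
  rw [norm_div, norm_mul, Real.norm_eq_abs, Real.norm_eq_abs, Real.norm_of_nonneg (by linarith)]
  exact div_le_of_le_mul₀ (by linarith) (abs_nonneg _)
    (mul_le_mul_of_nonneg_left ((abs_sin_le_one _).trans hodd) (abs_nonneg _))

theorem hasDerivAt_oddSineSeries (ha : Summable a) (x : ℝ) :
    HasDerivAt (oddSineSeries a) (π * ∑' ℓ : ℕ, a ℓ * cos (π * (2 * ℓ + 1) * x)) x := by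
  have hterm (ℓ : ℕ) (y : ℝ) :
      HasDerivAt (fun z => a ℓ * sin (π * (2 * ℓ + 1) * z) / (2 * ℓ + 1))
        (π * (a ℓ * cos (π * (2 * ℓ + 1) * y))) y := by
    have hodd : (2 * ℓ + 1 : ℝ) ≠ 0 := by positivity
    have := (((hasDerivAt_id y).const_mul (π * (2 * ℓ + 1))).sin.const_mul (a ℓ)).div_const
      (2 * ℓ + 1)
    simp only [id, mul_one] at this
    exact this.congr_deriv (by field_simp)
  have hbound (ℓ : ℕ) (y : ℝ) : ‖π * (a ℓ * cos (π * (2 * ℓ + 1) * y))‖ ≤ π * |a ℓ| := by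
    rw [norm_mul, norm_mul, Real.norm_of_nonneg pi_pos.le, Real.norm_eq_abs]
    exact mul_le_mul_of_nonneg_left
      (mul_le_of_le_one_right (abs_nonneg _) (abs_cos_le_one _)) pi_pos.le
  rw [← tsum_mul_left]
  exact hasDerivAt_tsum (ha.abs.mul_left π) hterm hbound (summable_oddSineSeries_term ha 0) x

theorem abs_sum_range_cos_odd_le_of_mem_Icc {b x : ℝ} (hb : 0 < b) (hx : x ∈ Set.Icc b (1 - b))
    (N : ℕ) : |∑ ℓ ∈ range N, cos (π * (2 * ℓ + 1) * x)| ≤ 1 / (2 * sin (π * b)) := by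
  have hsin_b : 0 < sin (π * b) :=
    sin_pos_of_pos_of_lt_pi (by positivity) (by nlinarith [pi_pos, hx.1.trans hx.2])
  have hsin_x := sin_pi_mul_le_sin_pi_mul (by linarith) hx
  simp_rw [show ∀ ℓ : ℕ, π * (2 * ℓ + 1) * x = (2 * ℓ + 1) * (π * x) from fun _ => by ring]
  exact (abs_sum_range_cos_odd_mul_le (hsin_b.trans_le hsin_x) N).trans (by gcongr)

theorem abs_tsum_mul_cos_odd_le (ha : Antitone a) (ha0 : ∀ ℓ, 0 ≤ a ℓ) (hs : Summable a)
    {b x : ℝ} (hb : 0 < b) (hx : x ∈ Set.Icc b (1 - b)) :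
    |∑' ℓ : ℕ, a ℓ * cos (π * (2 * ℓ + 1) * x)| ≤ a 0 / (2 * sin (π * b)) := by
  have hsum : Summable fun ℓ : ℕ => a ℓ * cos (π * (2 * ℓ + 1) * x) :=
    hs.of_norm_bounded fun ℓ => by
      rw [norm_mul, Real.norm_of_nonneg (ha0 ℓ)]
      exact mul_le_of_le_one_right (ha0 ℓ) (abs_cos_le_one _)
  rw [div_eq_mul_one_div, mul_comm]
  exact norm_tsum_smul_le_of_antitone ha ha0 (abs_sum_range_cos_odd_le_of_mem_Icc hb hx) hsum

theorem abs_oddSineSeries_sub_le (ha : Antitone a) (ha0 : ∀ ℓ, 0 ≤ a ℓ) (hs : Summable a)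
    {b x y : ℝ} (hb : 0 < b) (hx : x ∈ Set.Icc b (1 - b)) (hy : y ∈ Set.Icc b (1 - b)) :
    |oddSineSeries a x - oddSineSeries a y| ≤ π * a 0 / (2 * sin (π * b)) * |x - y| := by
  have hderiv_le (z : ℝ) (hz : z ∈ Set.Icc b (1 - b)) :
      ‖π * ∑' ℓ : ℕ, a ℓ * cos (π * (2 * ℓ + 1) * z)‖ ≤ π * a 0 / (2 * sin (π * b)) := by
    rw [norm_mul, Real.norm_of_nonneg pi_pos.le, Real.norm_eq_abs, mul_div_assoc]
    exact mul_le_mul_of_nonneg_left (abs_tsum_mul_cos_odd_le ha ha0 hs hb hz) pi_pos.le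
  simpa only [Real.norm_eq_abs] using
    (convex_Icc b (1 - b)).norm_image_sub_le_of_norm_hasDerivWithin_le
      (fun z _ => (hasDerivAt_oddSineSeries hs z).hasDerivWithinAt) hderiv_le hy hx

end OddSineSeries

theorem antitone_exp_neg_mul_odd_sq {c : ℝ} (hc : 0 ≤ c) :
    Antitone fun ℓ : ℕ => exp (-(c * (2 * ℓ + 1) ^ 2)) :=
  antitone_nat_of_succ_le fun n => exp_le_exp.2 <| by
    push_cast
    nlinarith [n.cast_nonneg (α := ℝ)]

theorem summable_exp_neg_mul_odd_sq {c : ℝ} (hc : 0 < c) :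
    Summable fun ℓ : ℕ => exp (-(c * (2 * ℓ + 1) ^ 2)) := by
  simpa only [neg_mul] using summable_exp_nat_mul_of_ge (neg_lt_zero.2 hc)
    (f := fun ℓ : ℕ => (2 * ℓ + 1 : ℝ) ^ 2) fun ℓ => by nlinarith [ℓ.cast_nonneg (α := ℝ)]

/-- Uniform-in-time interior Lipschitz bound for the heat semigroup applied to `𝟙`:
for `ϑ > 0` and `b ∈ (0,1/2)` there is `C > 0` such that for all `t > 0`
and `x, y ∈ [b, 1−b]`,
`|∑_{ℓ≥0} e^{−ϑπ²(2ℓ+1)²t} (sin(π(2ℓ+1)x) − sin(π(2ℓ+1)y))/(2ℓ+1)| ≤ C |x−y|`. -/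
theorem heat_semigroup_one_interior_lipschitz (ϑ b : ℝ) (hϑ : 0 < ϑ)
    (hb : b ∈ Set.Ioo (0 : ℝ) (1 / 2)) :
    ∃ C > (0 : ℝ), ∀ t > (0 : ℝ), ∀ x ∈ Set.Icc b (1 - b), ∀ y ∈ Set.Icc b (1 - b),
      |∑' ℓ : ℕ, Real.exp (-(ϑ * π ^ 2 * (2 * (ℓ : ℝ) + 1) ^ 2 * t))
          * (Real.sin (π * (2 * (ℓ : ℝ) + 1) * x) - Real.sin (π * (2 * (ℓ : ℝ) + 1) * y))
          / (2 * (ℓ : ℝ) + 1)|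
        ≤ C * |x - y| := by
  obtain ⟨hb0, hb1⟩ := hb
  have hsin_b : 0 < sin (π * b) := sin_pos_of_pos_of_lt_pi (by positivity) (by nlinarith [pi_pos])
  refine ⟨π / (2 * sin (π * b)), by positivity, fun t ht x hx y hy => ?_⟩
  have hc : 0 < ϑ * π ^ 2 * t := by positivity
  set a : ℕ → ℝ := fun ℓ => exp (-(ϑ * π ^ 2 * t * (2 * ℓ + 1) ^ 2))
  have hs : Summable a := summable_exp_neg_mul_odd_sq hc
  have hseries : ∑' ℓ : ℕ, exp (-(ϑ * π ^ 2 * (2 * (ℓ : ℝ) + 1) ^ 2 * t))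
        * (sin (π * (2 * (ℓ : ℝ) + 1) * x) - sin (π * (2 * (ℓ : ℝ) + 1) * y)) / (2 * (ℓ : ℝ) + 1)
      = oddSineSeries a x - oddSineSeries a y := by
    rw [oddSineSeries, oddSineSeries,
      ← (summable_oddSineSeries_term hs x).tsum_sub (summable_oddSineSeries_term hs y)]
    refine tsum_congr fun ℓ => ?_
    simp only [a, mul_right_comm _ ((2 * (ℓ : ℝ) + 1) ^ 2) t]
    ring
  have ha0_le_one : a 0 ≤ 1 := exp_le_one_iff.2 (neg_nonpos.2 (by positivity))
  rw [hseries]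
  calc _ ≤ π * a 0 / (2 * sin (π * b)) * |x - y| :=
        abs_oddSineSeries_sub_le (antitone_exp_neg_mul_odd_sq hc.le) (fun _ => (exp_pos _).le)
          hs hb0 hx hy
    _ ≤ π / (2 * sin (π * b)) * |x - y| := by
        gcongr
        exact mul_le_of_le_one_right pi_pos.le ha0_le_one
end

section
/- Let ϑ > 0 and b ∈ (0, 1/2). There exists a constant C > 0 such that for all t > 0, Δ > 0 and x ∈ [b, 1−b]: |∑_{ℓ=0}^{∞} e^{−ϑπ²(2ℓ+1)²t} · (1 − e^{−ϑπ²(2ℓ+1)²Δ}) · sin(π(2ℓ+1)x) / (2ℓ+1)| ≤ C·√Δ. -/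
/-!
Write the series as `∑ f ℓ · sin ((2ℓ+1)πx)` with `f ℓ = e^{-αk²} (1 - e^{-δk²}) / k`, where
`k = 2ℓ+1`, `α = ϑπ²t` and `δ = ϑπ²Δ`. The partial sums of `sin ((2ℓ+1)θ)` telescope to
`sin² (nθ) / sin θ`, so on `[b, 1-b]` they are bounded by `1 / sin (πb)`, and Abel summation bounds
the series by `1 / sin (πb)` times the total variation of `f`. Each increment `|f ℓ - f (ℓ+1)|` is
`O(min (δ, 1/k²))` uniformly in `α`, and splitting the sum at `k ≈ 1/√δ` gives
`∑ min (δ, 1/k²) = O(√δ)`.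
-/

open Real Filter Topology Finset

theorem Real.sin_le_sin_of_le_of_le_pi_sub {a y : ℝ} (ha : 0 ≤ a) (hay : a ≤ y)
    (hy : y ≤ π - a) : sin a ≤ sin y := by
  have hsin : 0 ≤ sin ((y - a) / 2) :=
    sin_nonneg_of_nonneg_of_le_pi (by linarith) (by linarith [pi_pos])
  have hcos : 0 ≤ cos ((y + a) / 2) := cos_nonneg_of_mem_Icc ⟨by linarith [pi_pos], by linarith⟩
  nlinarith [sin_sub_sin y a, mul_nonneg hsin hcos]

theorem sum_range_sin_odd_mul_sin (θ : ℝ) (n : ℕ) :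
    (∑ ℓ ∈ range n, sin ((2 * ℓ + 1) * θ)) * sin θ = sin (n * θ) ^ 2 := by
  have htelescope (ℓ : ℕ) : sin ((2 * ℓ + 1) * θ) * sin θ
      = (cos (2 * ℓ * θ) - cos (2 * (ℓ + 1 : ℕ) * θ)) / 2 := by
    rw [cos_sub_cos]
    push_cast
    ring_nf
    rw [sin_neg]
    ring
  rw [sum_mul, sum_congr rfl fun ℓ _ ↦ htelescope ℓ, ← sum_div,
    sum_range_sub' (fun ℓ : ℕ ↦ cos (2 * ℓ * θ)), sin_sq_eq_half_sub]
  push_cast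
  ring_nf
  rw [cos_zero]
  ring

theorem abs_sum_range_sin_odd_le {θ : ℝ} (hθ : 0 < sin θ) (n : ℕ) :
    |∑ ℓ ∈ range n, sin ((2 * ℓ + 1) * θ)| ≤ 1 / sin θ := by
  rw [eq_div_of_mul_eq hθ.ne' (sum_range_sin_odd_mul_sin θ n), abs_of_nonneg (by positivity)]
  exact div_le_div_of_nonneg_right (sin_sq_le_one _) hθ.le

theorem norm_tsum_smul_le_of_bounded_partial_sums {E : Type*} [NormedAddCommGroup E]
    [NormedSpace ℝ E] {f : ℕ → ℝ} {g : ℕ → E} {D T : ℝ} (hg : ∀ n, ‖∑ i ∈ range n, g i‖ ≤ D)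
    (hf : Tendsto f atTop (𝓝 0)) (hvar : ∀ n, ∑ i ∈ range n, |f (i + 1) - f i| ≤ T)
    (hfg : Summable fun i ↦ f i • g i) :
    ‖∑' i, f i • g i‖ ≤ D * T := by
  have hpartial (n : ℕ) : ‖∑ i ∈ range (n + 1), f i • g i‖ ≤ |f n| * D + D * T := by
    rw [sum_range_by_parts, Nat.add_sub_cancel]
    calc _ ≤ ‖f n • ∑ i ∈ range (n + 1), g i‖
          + ‖∑ i ∈ range n, (f (i + 1) - f i) • ∑ j ∈ range (i + 1), g j‖ := norm_sub_le _ _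
      _ ≤ |f n| * D + ∑ i ∈ range n, |f (i + 1) - f i| * D := by
        gcongr
        · rw [norm_smul, Real.norm_eq_abs]
          gcongr
          exact hg _
        · refine (norm_sum_le _ _).trans (sum_le_sum fun i _ ↦ ?_)
          rw [norm_smul, Real.norm_eq_abs]
          gcongr
          exact hg _
      _ ≤ |f n| * D + D * T := by
        rw [← sum_mul, mul_comm D]
        gcongr
        · exact (norm_nonneg _).trans (hg 0)
        · exact hvar n
  have hbound : Tendsto (fun n ↦ |f n| * D + D * T) atTop (𝓝 (D * T)) := by
    simpa using (hf.abs.mul_const D).add_const (D * T)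
  exact le_of_tendsto_of_tendsto'
    (hfg.hasSum.tendsto_sum_nat.comp (tendsto_add_atTop_nat 1)).norm hbound hpartial

theorem one_div_odd_sq_le_sub (m : ℝ) (hm : 0 ≤ m) :
    1 / (2 * m + 1) ^ 2 ≤ 2 / (2 * m + 1) - 2 / (2 * (m + 1) + 1) := by
  rw [div_sub_div _ _ (by positivity) (by positivity),
    div_le_div_iff₀ (by positivity) (by positivity)]
  nlinarith

theorem sum_range_min_one_div_odd_sq_le {δ : ℝ} (hδ : 0 ≤ δ) (n N : ℕ) :
    ∑ ℓ ∈ range n, min δ (1 / (2 * ℓ + 1) ^ 2) ≤ N * δ + 2 / (2 * N + 1) := by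
  set u : ℕ → ℝ := fun m ↦ 2 / (2 * m + 1)
  have hterm (ℓ : ℕ) : 0 ≤ min δ (1 / (2 * (ℓ : ℝ) + 1) ^ 2) := le_min hδ (by positivity)
  calc ∑ ℓ ∈ range n, min δ (1 / (2 * ℓ + 1) ^ 2)
      ≤ ∑ ℓ ∈ range (N + n), min δ (1 / (2 * ℓ + 1) ^ 2) :=
        sum_le_sum_of_subset_of_nonneg (range_mono (by omega)) fun ℓ _ _ ↦ hterm ℓ
    _ = ∑ ℓ ∈ range N, min δ (1 / (2 * ℓ + 1) ^ 2)
          + ∑ ℓ ∈ range n, min δ (1 / (2 * ((N + ℓ : ℕ) : ℝ) + 1) ^ 2) := sum_range_add _ _ _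
    _ ≤ ∑ ℓ ∈ range N, δ + ∑ ℓ ∈ range n, (u (N + ℓ) - u (N + (ℓ + 1))) := by
        gcongr with ℓ _ ℓ _
        · exact min_le_left _ _
        · refine (min_le_right _ _).trans ?_
          simpa [u, add_assoc] using one_div_odd_sq_le_sub ((N + ℓ : ℕ) : ℝ) (by positivity)
    _ = N * δ + (u N - u (N + n)) := by
        rw [sum_range_sub' (fun ℓ ↦ u (N + ℓ))]
        simp
    _ ≤ N * δ + 2 / (2 * N + 1) := by
        have : 0 ≤ u (N + n) := by positivity
        simp only [u] at this ⊢
        linarith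

theorem sum_range_min_one_div_odd_sq_le_sqrt {δ : ℝ} (hδ : 0 < δ) (n : ℕ) :
    ∑ ℓ ∈ range n, min δ (1 / (2 * ℓ + 1) ^ 2) ≤ 3 * √δ := by
  set N := ⌊1 / √δ⌋₊
  have hs : 0 < √δ := sqrt_pos.mpr hδ
  have hN : (N : ℝ) ≤ 1 / √δ := Nat.floor_le (by positivity)
  have hN' : 1 / √δ < N + 1 := Nat.lt_floor_add_one _
  have hhead : N * δ ≤ √δ := by
    calc (N : ℝ) * δ ≤ 1 / √δ * δ := by gcongr
      _ = √δ := by rw [one_div, ← div_eq_inv_mul, div_sqrt]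
  have htail : 2 / (2 * N + 1) ≤ 2 * √δ := by
    rw [div_le_iff₀ (by positivity)]
    rw [div_lt_iff₀ hs] at hN'
    nlinarith
  linarith [sum_range_min_one_div_odd_sq_le hδ.le n N]

theorem one_sub_exp_neg_mul_sq_le (δ : ℝ) {k : ℝ} (hk : 0 < k) :
    1 - exp (-(δ * k ^ 2)) ≤ k ^ 2 * min δ (1 / k ^ 2) := by
  rw [mul_min_of_nonneg _ _ (by positivity), mul_one_div_cancel (by positivity), mul_comm (k ^ 2)]
  exact le_min (by linarith [one_sub_le_exp_neg (δ * k ^ 2)])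
    (by linarith [exp_pos (-(δ * k ^ 2))])

theorem exp_neg_mul_sq_sub_le {β k : ℝ} (hβ : 0 ≤ β) (hk : 1 ≤ k) :
    exp (-(β * k ^ 2)) - exp (-(β * (k + 2) ^ 2)) ≤ 8 * k * min β (1 / k ^ 2) := by
  set E := exp (-(β * k ^ 2))
  have hE : E ≤ 1 := exp_le_one_iff.mpr (by nlinarith)
  have hdecay : β * k ^ 2 * E ≤ 1 :=
    (mul_exp_neg_le_exp_neg_one _).trans (exp_le_one_iff.mpr (by norm_num))
  have hdiff : E - exp (-(β * (k + 2) ^ 2)) ≤ 8 * k * β * E := by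
    have hsplit : exp (-(β * (k + 2) ^ 2)) = E * exp (-(β * (4 * k + 4))) := by
      rw [← exp_add]; ring_nf
    have hE0 : 0 ≤ E := (exp_pos _).le
    rw [hsplit]
    nlinarith [mul_le_mul_of_nonneg_left (one_sub_le_exp_neg (β * (4 * k + 4))) hE0,
      mul_nonneg hβ hE0]
  rw [mul_min_of_nonneg _ _ (by positivity)]
  refine le_min (hdiff.trans (mul_le_of_le_one_right (by positivity) hE)) (hdiff.trans ?_)
  have hk0 : 0 < k := by linarith
  rw [show 8 * k * β * E = 8 * k * (1 / k ^ 2) * (β * k ^ 2 * E) by field_simp]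
  exact mul_le_of_le_one_right (by positivity) hdecay

noncomputable def heatIncrementCoeff (α δ k : ℝ) : ℝ :=
  exp (-(α * k ^ 2)) * (1 - exp (-(δ * k ^ 2))) / k

theorem heatIncrementCoeff_nonneg (α : ℝ) {δ k : ℝ} (hδ : 0 ≤ δ) (hk : 0 ≤ k) :
    0 ≤ heatIncrementCoeff α δ k := by
  have : exp (-(δ * k ^ 2)) ≤ 1 := exp_le_one_iff.mpr (by nlinarith)
  unfold heatIncrementCoeff
  have := exp_pos (-(α * k ^ 2))
  positivity

theorem heatIncrementCoeff_le (α δ : ℝ) {k : ℝ} (hk : 0 ≤ k) :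
    heatIncrementCoeff α δ k ≤ exp (-(α * k ^ 2)) / k := by
  unfold heatIncrementCoeff
  gcongr
  exact mul_le_of_le_one_right (exp_pos _).le (by linarith [exp_pos (-(δ * k ^ 2))])

theorem abs_heatIncrementCoeff_sub_le {α δ k : ℝ} (hα : 0 ≤ α) (hδ : 0 ≤ δ) (hk : 1 ≤ k) :
    |heatIncrementCoeff α δ k - heatIncrementCoeff α δ (k + 2)| ≤ 14 * min δ (1 / k ^ 2) := by
  have hk0 : 0 < k := by linarith
  set A₁ := exp (-(α * k ^ 2))
  set A₂ := exp (-(α * (k + 2) ^ 2))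
  set D₁ := exp (-(δ * k ^ 2))
  set D₂ := exp (-(δ * (k + 2) ^ 2))
  set m := min δ (1 / k ^ 2)
  have hA₂ : 0 < A₂ := exp_pos _
  have hA₂₁ : A₂ ≤ A₁ := exp_le_exp.mpr (by nlinarith)
  have hA₂_le : A₂ ≤ 1 := exp_le_one_iff.mpr (by nlinarith)
  have hD₂₁ : D₂ ≤ D₁ := exp_le_exp.mpr (by nlinarith)
  have hD₁ : D₁ ≤ 1 := exp_le_one_iff.mpr (by nlinarith)
  have hA : A₁ - A₂ ≤ 8 / k := by
    refine (exp_neg_mul_sq_sub_le hα hk).trans ?_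
    calc 8 * k * min α (1 / k ^ 2) ≤ 8 * k * (1 / k ^ 2) := by gcongr; exact min_le_right _ _
      _ = 8 / k := by field_simp
  have hD : D₁ - D₂ ≤ 8 * k * m := exp_neg_mul_sq_sub_le hδ hk
  have hD₁m : 1 - D₁ ≤ k ^ 2 * m := one_sub_exp_neg_mul_sq_le δ hk0
  have hD₂m : 1 - D₂ ≤ (k + 2) ^ 2 * m := by
    refine (one_sub_exp_neg_mul_sq_le δ (by linarith)).trans ?_
    gcongr
    exact min_le_min le_rfl (by gcongr; linarith)
  have hdecomp : heatIncrementCoeff α δ k - heatIncrementCoeff α δ (k + 2)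
      = (A₁ - A₂) * (1 - D₁) / k - A₂ * (D₁ - D₂) / k + A₂ * (1 - D₂) * (2 / (k * (k + 2))) := by
    rw [show heatIncrementCoeff α δ k = A₁ * (1 - D₁) / k from rfl,
      show heatIncrementCoeff α δ (k + 2) = A₂ * (1 - D₂) / (k + 2) from rfl]
    field_simp
    ring
  have h₁ : (A₁ - A₂) * (1 - D₁) / k ≤ 8 * m := by
    calc (A₁ - A₂) * (1 - D₁) / k ≤ 8 / k * (k ^ 2 * m) / k := by gcongr
      _ = 8 * m := by field_simp
  have h₂ : A₂ * (D₁ - D₂) / k ≤ 8 * m := by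
    calc A₂ * (D₁ - D₂) / k ≤ 1 * (8 * k * m) / k := by gcongr
      _ = 8 * m := by field_simp
  have h₃ : A₂ * (1 - D₂) * (2 / (k * (k + 2))) ≤ 6 * m := by
    calc A₂ * (1 - D₂) * (2 / (k * (k + 2))) ≤ 1 * ((k + 2) ^ 2 * m) * (2 / (k * (k + 2))) := by
          gcongr; linarith
      _ = 2 * (k + 2) / k * m := by field_simp
      _ ≤ 6 * m := by
          gcongr
          rw [div_le_iff₀ hk0]
          linarith
  have hA₁₂ := sub_nonneg.mpr hA₂₁
  have hD₁₂ := sub_nonneg.mpr hD₂₁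
  have hD₁' := sub_nonneg.mpr hD₁
  have hD₂' : 0 ≤ 1 - D₂ := by linarith
  have h₁' : 0 ≤ (A₁ - A₂) * (1 - D₁) / k := by positivity
  have h₂' : 0 ≤ A₂ * (D₁ - D₂) / k := by positivity
  have h₃' : 0 ≤ A₂ * (1 - D₂) * (2 / (k * (k + 2))) := by positivity
  rw [hdecomp, abs_le]
  constructor <;> linarith

theorem abs_tsum_heatIncrementCoeff_mul_sin_le {α δ θ : ℝ} (hα : 0 < α) (hδ : 0 < δ)
    (hθ : 0 < sin θ) :
    |∑' ℓ : ℕ, heatIncrementCoeff α δ (2 * ℓ + 1) * sin ((2 * ℓ + 1) * θ)|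
      ≤ 1 / sin θ * (14 * (3 * √δ)) := by
  set f : ℕ → ℝ := fun ℓ ↦ heatIncrementCoeff α δ (2 * ℓ + 1)
  have hk (ℓ : ℕ) : (1 : ℝ) ≤ 2 * ℓ + 1 := by linarith [ℓ.cast_nonneg (α := ℝ)]
  have hf_nonneg (ℓ : ℕ) : 0 ≤ f ℓ := heatIncrementCoeff_nonneg α hδ.le (by linarith [hk ℓ])
  have hf_le (ℓ : ℕ) : f ℓ ≤ exp (-α * (2 * ℓ + 1) ^ 2) := by
    refine (heatIncrementCoeff_le α δ (by linarith [hk ℓ])).trans ?_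
    rw [neg_mul]
    exact div_le_self (exp_pos _).le (hk ℓ)
  have hf_tendsto : Tendsto f atTop (𝓝 0) := by
    refine squeeze_zero hf_nonneg (fun ℓ ↦ ?_) tendsto_one_div_add_atTop_nhds_zero_nat
    refine (heatIncrementCoeff_le α δ (by linarith [hk ℓ])).trans ?_
    gcongr
    · exact exp_le_one_iff.mpr (by nlinarith [hk ℓ])
    · linarith [ℓ.cast_nonneg (α := ℝ)]
  have hsum : Summable fun ℓ ↦ f ℓ • sin ((2 * ℓ + 1) * θ) := by
    refine (summable_exp_nat_mul_of_ge (f := fun ℓ : ℕ ↦ (2 * ℓ + 1 : ℝ) ^ 2)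
      (neg_lt_zero.mpr hα) fun ℓ ↦ ?_).of_norm_bounded fun ℓ ↦ ?_
    · nlinarith [hk ℓ]
    · rw [norm_smul, norm_of_nonneg (hf_nonneg ℓ)]
      exact mul_le_of_le_one_right (hf_nonneg ℓ) (abs_sin_le_one _) |>.trans (hf_le ℓ)
  have hvar (n : ℕ) : ∑ ℓ ∈ range n, |f (ℓ + 1) - f ℓ| ≤ 14 * (3 * √δ) := by
    calc ∑ ℓ ∈ range n, |f (ℓ + 1) - f ℓ|
        ≤ ∑ ℓ ∈ range n, 14 * min δ (1 / (2 * ℓ + 1) ^ 2) := by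
          refine sum_le_sum fun ℓ _ ↦ ?_
          rw [abs_sub_comm]
          have : (2 * ((ℓ + 1 : ℕ) : ℝ) + 1) = 2 * ℓ + 1 + 2 := by push_cast; ring
          simpa only [f, this] using abs_heatIncrementCoeff_sub_le hα.le hδ.le (hk ℓ)
      _ ≤ 14 * (3 * √δ) := by
          rw [← mul_sum]
          gcongr
          exact sum_range_min_one_div_odd_sq_le_sqrt hδ n
  simpa using norm_tsum_smul_le_of_bounded_partial_sums (abs_sum_range_sin_odd_le hθ) hf_tendsto
    hvar hsum

/-- Uniform interior time-increment bound for the heat semigroup applied to `𝟙`: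
for `ϑ > 0` and `b ∈ (0,1/2)` there is `C > 0` such that for all `t > 0`, `Δ > 0`
and `x ∈ [b, 1−b]`,
`|∑_{ℓ≥0} e^{−ϑπ²(2ℓ+1)²t} (1 − e^{−ϑπ²(2ℓ+1)²Δ}) sin(π(2ℓ+1)x)/(2ℓ+1)| ≤ C √Δ`. -/
theorem heat_semigroup_one_time_increment_bound (ϑ b : ℝ) (hϑ : 0 < ϑ)
    (hb : b ∈ Set.Ioo (0 : ℝ) (1 / 2)) :
    ∃ C > (0 : ℝ), ∀ t > (0 : ℝ), ∀ Δ > (0 : ℝ), ∀ x ∈ Set.Icc b (1 - b),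
      |∑' ℓ : ℕ, Real.exp (-(ϑ * π ^ 2 * (2 * (ℓ : ℝ) + 1) ^ 2 * t))
          * (1 - Real.exp (-(ϑ * π ^ 2 * (2 * (ℓ : ℝ) + 1) ^ 2 * Δ)))
          * Real.sin (π * (2 * (ℓ : ℝ) + 1) * x) / (2 * (ℓ : ℝ) + 1)|
        ≤ C * Real.sqrt Δ := by
  obtain ⟨hb₀, hb₁⟩ := hb
  have hc : 0 < ϑ * π ^ 2 := by positivity
  have hsin_b : 0 < sin (π * b) :=
    sin_pos_of_pos_of_lt_pi (by positivity) (by nlinarith [pi_pos])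
  refine ⟨42 * √(ϑ * π ^ 2) / sin (π * b), by positivity, fun t ht Δ hΔ x ⟨hbx, hxb⟩ ↦ ?_⟩
  have hsin_x : sin (π * b) ≤ sin (π * x) :=
    sin_le_sin_of_le_of_le_pi_sub (by positivity) (by nlinarith [pi_pos]) (by nlinarith [pi_pos])
  have hsummand (ℓ : ℕ) : exp (-(ϑ * π ^ 2 * (2 * (ℓ : ℝ) + 1) ^ 2 * t))
      * (1 - exp (-(ϑ * π ^ 2 * (2 * (ℓ : ℝ) + 1) ^ 2 * Δ)))
      * sin (π * (2 * (ℓ : ℝ) + 1) * x) / (2 * (ℓ : ℝ) + 1)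
      = heatIncrementCoeff (ϑ * π ^ 2 * t) (ϑ * π ^ 2 * Δ) (2 * ℓ + 1)
        * sin ((2 * ℓ + 1) * (π * x)) := by
    unfold heatIncrementCoeff
    ring_nf
  rw [tsum_congr hsummand]
  calc _ ≤ 1 / sin (π * x) * (14 * (3 * √(ϑ * π ^ 2 * Δ))) :=
        abs_tsum_heatIncrementCoeff_mul_sin_le (by positivity) (by positivity)
          (hsin_b.trans_le hsin_x)
    _ ≤ 1 / sin (π * b) * (14 * (3 * √(ϑ * π ^ 2 * Δ))) := by gcongr
    _ = 42 * √(ϑ * π ^ 2) / sin (π * b) * √Δ := by rw [sqrt_mul hc.le]; ring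
end

section
/- Let X be a continuous centered Gaussian field on [0,∞)×[0,1] as in the context, with increment variance bound Var(X(t,x) − X(s,y)) ≤ L(√|t−s| + |x−y|) and X(t,0) = X(t,1) = 0 a.s. Then for every p ∈ [1,∞) there is a constant C > 0, depending only on p and L, such that sup_{t ≥ 0} E[(sup_{x ∈ [0,1]} |X(t,x)|)^p] ≤ C. -/
/-!
Fix `t` and write `f = X t · ω`. As `f 0 = 0`, the triangle inequality along the dyadic grid
gives `|f x| ≤ ∑ₘ Mₘ` on `[0,1]`, where `Mₘ` is the largest increment of `f` between
neighbouring points of the grid of mesh `2⁻ᵐ` (for non-dyadic `x` by continuity). Each of these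
`2ᵐ` increments is centred Gaussian with variance at most `L 2⁻ᵐ`, so bounding `Mₘ^q` by the
sum of the `q`-th powers of the increments gives `‖Mₘ‖_q ≤ 2^{m/q} (L 2⁻ᵐ)^{1/2} ‖N(0,1)‖_q`, which is summable in `m` once `q > 2`.
Minkowski's inequality in `L^q` with `q = max p 3`, and `‖·‖_p ≤ ‖·‖_q`, give a bound that does
not depend on `t`.
-/

open Real MeasureTheory ProbabilityTheory
open scoped NNReal ENNReal
open Filter Finset Topology

section DyadicChaining

variable {E : Type*} [NormedAddCommGroup E]

noncomputable def dyadicIncrementSup (f : ℝ → E) (m : ℕ) : ℝ≥0∞ :=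
  (range (2 ^ m)).sup fun j => ‖f ((j + 1) / 2 ^ m) - f (j / 2 ^ m)‖ₑ

lemma enorm_sub_le_dyadicIncrementSup (f : ℝ → E) {m j : ℕ} (hj : j < 2 ^ m) :
    ‖f ((j + 1) / 2 ^ m) - f (j / 2 ^ m)‖ₑ ≤ dyadicIncrementSup f m :=
  le_sup (f := fun j : ℕ => ‖f ((j + 1) / 2 ^ m) - f (j / 2 ^ m)‖ₑ) (mem_range.2 hj)

lemma enorm_dyadic_le_sum_dyadicIncrementSup {f : ℝ → E} (hf0 : f 0 = 0) (N : ℕ) :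
    ∀ k : ℕ, k ≤ 2 ^ N → ‖f (k / 2 ^ N)‖ₑ ≤ ∑ m ∈ range (N + 1), dyadicIncrementSup f m := by
  induction N with
  | zero =>
    intro k hk
    interval_cases k
    · simp [hf0]
    · simpa [hf0] using enorm_sub_le_dyadicIncrementSup f (m := 0) (j := 0) one_pos
  | succ N ih =>
    intro k hk
    rw [pow_succ] at hk
    have hcoarse (j : ℕ) : ((2 * j : ℕ) : ℝ) / 2 ^ (N + 1) = j / 2 ^ N := by
      push_cast; rw [pow_succ]; field_simp
    rw [sum_range_succ]
    rcases Nat.even_or_odd' k with ⟨j, rfl | rfl⟩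
    · rw [hcoarse]
      exact (ih j (by omega)).trans le_self_add
    · have hstep := enorm_add_le (f ((2 * j : ℕ) / 2 ^ (N + 1)))
        (f ((2 * j + 1 : ℕ) / 2 ^ (N + 1)) - f ((2 * j : ℕ) / 2 ^ (N + 1)))
      rw [add_sub_cancel] at hstep
      refine hstep.trans (add_le_add ?_ ?_)
      · rw [hcoarse]
        exact ih j (by omega)
      · exact_mod_cast enorm_sub_le_dyadicIncrementSup f (m := N + 1) (j := 2 * j)
          (by rw [pow_succ]; omega)

lemma enorm_le_tsum_dyadicIncrementSup {f : ℝ → E} (hf0 : f 0 = 0)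
    (hf : ContinuousOn f (Set.Icc 0 1)) {x : ℝ} (hx : x ∈ Set.Icc 0 1) :
    ‖f x‖ₑ ≤ ∑' m, dyadicIncrementSup f m := by
  have hpow : Tendsto (fun N : ℕ => (2 : ℝ) ^ N) atTop atTop :=
    tendsto_pow_atTop_atTop_of_one_lt one_lt_two
  have hfloor (N : ℕ) : ⌊x * 2 ^ N⌋₊ ≤ 2 ^ N :=
    Nat.floor_le_of_le (by simpa using mul_le_of_le_one_left (pow_nonneg zero_le_two N) hx.2)
  have hmem (N : ℕ) : (⌊x * 2 ^ N⌋₊ : ℝ) / 2 ^ N ∈ Set.Icc 0 1 :=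
    ⟨by positivity, div_le_one_of_le₀ (by exact_mod_cast hfloor N) (by positivity)⟩
  have happrox : Tendsto (fun N : ℕ => (⌊x * 2 ^ N⌋₊ : ℝ) / 2 ^ N) atTop (𝓝[Set.Icc 0 1] x) :=
    tendsto_nhdsWithin_iff.2 ⟨(tendsto_nat_floor_mul_div_atTop hx.1).comp hpow,
      Eventually.of_forall hmem⟩
  refine le_of_tendsto' ((hf x hx).tendsto.comp happrox).enorm fun N => ?_
  exact (enorm_dyadic_le_sum_dyadicIncrementSup hf0 N _ (hfloor N)).trans (ENNReal.sum_le_tsum _)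
end DyadicChaining

section LpBounds

variable {α ι : Type*} [MeasurableSpace α] {μ : Measure α} {q : ℝ}

lemma aemeasurable_finset_sup {s : Finset ι} {g : ι → α → ℝ≥0∞}
    (hg : ∀ j ∈ s, AEMeasurable (g j) μ) : AEMeasurable (fun a => s.sup (g · a)) μ := by
  refine (Finset.sup_induction (p := (AEMeasurable · μ)) aemeasurable_const
    (fun _ h₁ _ h₂ => h₁.sup h₂) hg).congr (ae_of_all _ fun a => ?_)
  exact Finset.sup_apply s g a

lemma eLpNorm'_finset_sup_le (hq : 0 < q) {s : Finset ι} {g : ι → α → ℝ≥0∞}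
    (hg : ∀ j ∈ s, AEMeasurable (g j) μ) {B : ℝ≥0∞} (hB : ∀ j ∈ s, eLpNorm' (g j) q μ ≤ B) :
    eLpNorm' (fun a => s.sup (g · a)) q μ ≤ (#s : ℝ≥0∞) ^ (1 / q) * B := by
  have hsup_rpow (a : α) : s.sup (g · a) ^ q ≤ ∑ j ∈ s, g j a ^ q := by
    rcases s.eq_empty_or_nonempty with rfl | hs
    · simp [ENNReal.zero_rpow_of_pos hq]
    · obtain ⟨j, hj, hmax⟩ := exists_mem_eq_sup s hs (g · a)
      rw [hmax]
      exact single_le_sum (f := fun j => g j a ^ q) (fun _ _ => zero_le) hj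
  have hmoment (j : ι) (hj : j ∈ s) : ∫⁻ a, g j a ^ q ∂μ ≤ B ^ q := by
    simpa [← lintegral_rpow_enorm_eq_rpow_eLpNorm' hq] using
      ENNReal.rpow_le_rpow (hB j hj) hq.le
  calc eLpNorm' (fun a => s.sup (g · a)) q μ
      ≤ (∑ j ∈ s, ∫⁻ a, g j a ^ q ∂μ) ^ (1 / q) := by
        rw [eLpNorm'_eq_lintegral_enorm, ← lintegral_finsetSum' _
          fun j hj => (hg j hj).pow_const q]
        gcongr with a
        exact hsup_rpow a
    _ ≤ (#s * B ^ q) ^ (1 / q) := by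
        gcongr
        simpa using sum_le_sum hmoment
    _ = (#s : ℝ≥0∞) ^ (1 / q) * B := by
        rw [ENNReal.mul_rpow_of_nonneg _ _ (by positivity), ← ENNReal.rpow_mul,
          mul_one_div_cancel hq.ne', ENNReal.rpow_one]

lemma eLpNorm'_tsum_le (hq : 1 ≤ q) {g : ℕ → α → ℝ≥0∞} (hg : ∀ m, AEMeasurable (g m) μ) :
    eLpNorm' (fun a => ∑' m, g m a) q μ ≤ ∑' m, eLpNorm' (g m) q μ := by
  have hq0 : 0 < q := by linarith
  set S : ℕ → α → ℝ≥0∞ := fun N => ∑ m ∈ range N, g m with hS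
  have hmono (a : α) : Monotone fun N => S N a := fun _ _ h => by
    simpa [hS] using sum_le_sum_of_subset (range_subset_range.2 h)
  have hrpow_iSup {r : ℝ} (hr : 0 < r) (x : ℕ → ℝ≥0∞) : (⨆ N, x N) ^ r = ⨆ N, x N ^ r :=
    (ENNReal.monotone_rpow_of_nonneg hr.le).map_iSup_of_continuousAt
      ENNReal.continuous_rpow_const.continuousAt (ENNReal.zero_rpow_of_pos hr)
  have hpartial (N : ℕ) : eLpNorm' (S N) q μ ≤ ∑' m, eLpNorm' (g m) q μ :=
    (eLpNorm'_sum_le (fun m _ => (hg m).aestronglyMeasurable) hq).trans (ENNReal.sum_le_tsum _)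
  calc eLpNorm' (fun a => ∑' m, g m a) q μ
      = (⨆ N, ∫⁻ a, S N a ^ q ∂μ) ^ (1 / q) := by
        rw [eLpNorm'_eq_lintegral_enorm, ← lintegral_iSup' (fun N => ?_)
          (Eventually.of_forall fun a _ _ h => ENNReal.rpow_le_rpow (hmono a h) hq0.le)]
        · simp_rw [enorm_eq_self, ENNReal.tsum_eq_iSup_nat, hrpow_iSup hq0, hS, Finset.sum_apply]
        · simpa [hS] using (Finset.aemeasurable_fun_sum _ fun m _ => hg m).pow_const q
    _ = ⨆ N, eLpNorm' (S N) q μ := by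
        simp_rw [hrpow_iSup (one_div_pos.2 hq0), eLpNorm'_eq_lintegral_enorm, enorm_eq_self]
    _ ≤ ∑' m, eLpNorm' (g m) q μ := iSup_le hpartial

end LpBounds

section GaussianMoments

variable {Ω : Type*} [MeasurableSpace Ω] {P : Measure Ω} {q : ℝ}

lemma eLpNorm'_id_map {f : Ω → ℝ} (hf : AEMeasurable f P) :
    eLpNorm' id q (P.map f) = eLpNorm' f q P := by
  rw [eLpNorm'_eq_lintegral_enorm, eLpNorm'_eq_lintegral_enorm,
    lintegral_map' (by fun_prop) hf]
  rfl

lemma eLpNorm'_id_gaussianReal (hq : 0 < q) (v : ℝ≥0) :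
    eLpNorm' id q (gaussianReal 0 v)
      = ENNReal.ofReal √v * eLpNorm' id q (gaussianReal 0 1) := by
  have hscale : (gaussianReal 0 1).map (√v * ·) = gaussianReal 0 v := by
    rw [gaussianReal_map_const_mul]
    congr 1
    · simp
    · ext; simp
  rw [← hscale, eLpNorm'_id_map (by fun_prop), ← Real.enorm_of_nonneg (sqrt_nonneg _),
    ← eLpNorm'_const_smul _ hq]
  rfl

lemma eLpNorm'_id_gaussianReal_lt_top (hq : 0 < q) (v : ℝ≥0) :
    eLpNorm' id q (gaussianReal 0 v) < ∞ := by
  have := (memLp_id_gaussianReal (μ := 0) (v := v) q.toNNReal).eLpNorm_lt_top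
  rwa [eLpNorm_eq_eLpNorm' (by simpa using hq) ENNReal.coe_ne_top, ENNReal.coe_toReal,
    Real.coe_toNNReal _ hq.le] at this

lemma eLpNorm'_of_map_eq_gaussianReal (hq : 0 < q) {Y : Ω → ℝ} {v : ℝ≥0}
    (hY : P.map Y = gaussianReal 0 v) :
    eLpNorm' Y q P = ENNReal.ofReal √v * eLpNorm' id q (gaussianReal 0 1) := by
  have hmeas : AEMeasurable Y P := aemeasurable_of_map_neZero (by rw [hY]; infer_instance)
  rw [← eLpNorm'_id_map hmeas, hY, eLpNorm'_id_gaussianReal hq]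

end GaussianMoments

section GaussianIncrements

variable {Ω : Type*} [MeasurableSpace Ω] {P : Measure Ω} {Y : ℝ → Ω → ℝ} {L p q : ℝ}

lemma exists_map_dyadic_increment_eq_gaussianReal
    (hY : ∀ x ∈ Set.Icc (0 : ℝ) 1, ∀ y ∈ Set.Icc (0 : ℝ) 1, ∃ v : ℝ≥0,
      (v : ℝ) ≤ L * |x - y| ∧ P.map (fun ω => Y x ω - Y y ω) = gaussianReal 0 v)
    {m j : ℕ} (hj : j ∈ range (2 ^ m)) :
    ∃ v : ℝ≥0, (v : ℝ) ≤ L / 2 ^ m ∧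
      P.map (fun ω => Y ((j + 1) / 2 ^ m) ω - Y (j / 2 ^ m) ω) = gaussianReal 0 v := by
  have hdyadic {k : ℕ} (hk : k ≤ 2 ^ m) : (k : ℝ) / 2 ^ m ∈ Set.Icc (0 : ℝ) 1 :=
    ⟨by positivity, div_le_one_of_le₀ (by exact_mod_cast hk) (by positivity)⟩
  have hj := mem_range.1 hj
  have hj1 : ((j : ℝ) + 1) / 2 ^ m ∈ Set.Icc (0 : ℝ) 1 := by exact_mod_cast hdyadic hj
  obtain ⟨v, hv, hlaw⟩ := hY _ hj1 _ (hdyadic hj.le)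
  refine ⟨v, hv.trans_eq ?_, hlaw⟩
  rw [← sub_div, add_sub_cancel_left, abs_of_pos (by positivity), mul_one_div]

lemma aemeasurable_dyadicIncrementSup
    (hY : ∀ x ∈ Set.Icc (0 : ℝ) 1, ∀ y ∈ Set.Icc (0 : ℝ) 1, ∃ v : ℝ≥0,
      (v : ℝ) ≤ L * |x - y| ∧ P.map (fun ω => Y x ω - Y y ω) = gaussianReal 0 v) (m : ℕ) :
    AEMeasurable (fun ω => dyadicIncrementSup (Y · ω) m) P := by
  refine aemeasurable_finset_sup fun j hj => AEMeasurable.enorm ?_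
  obtain ⟨v, -, hlaw⟩ := exists_map_dyadic_increment_eq_gaussianReal hY hj
  exact aemeasurable_of_map_neZero (by rw [hlaw]; infer_instance)

lemma eLpNorm'_dyadicIncrementSup_le (hq : 0 < q)
    (hY : ∀ x ∈ Set.Icc (0 : ℝ) 1, ∀ y ∈ Set.Icc (0 : ℝ) 1, ∃ v : ℝ≥0,
      (v : ℝ) ≤ L * |x - y| ∧ P.map (fun ω => Y x ω - Y y ω) = gaussianReal 0 v) (m : ℕ) :
    eLpNorm' (fun ω => dyadicIncrementSup (Y · ω) m) q P
      ≤ ENNReal.ofReal (√L * ((2 : ℝ) ^ (1 / q - 1 / 2)) ^ m)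
          * eLpNorm' id q (gaussianReal 0 1) := by
  choose! v hv hlaw using fun j (hj : j ∈ range (2 ^ m)) =>
    exists_map_dyadic_increment_eq_gaussianReal hY hj
  have hcoeff : ((2 ^ m : ℕ) : ℝ≥0∞) ^ (1 / q) * ENNReal.ofReal √(L / 2 ^ m)
      = ENNReal.ofReal (√L * ((2 : ℝ) ^ (1 / q - 1 / 2)) ^ m) := by
    have hreal : ((2 : ℝ) ^ m) ^ (1 / q) * √(L / 2 ^ m)
        = √L * ((2 : ℝ) ^ (1 / q - 1 / 2)) ^ m := by
      rw [sqrt_div' _ (by positivity), sqrt_eq_rpow, sqrt_eq_rpow, ← rpow_natCast, ← rpow_natCast,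
        ← rpow_mul zero_le_two, ← rpow_mul zero_le_two, ← rpow_mul (by positivity), sub_mul,
        rpow_sub zero_lt_two, mul_comm (1 / q), mul_comm (1 / 2 : ℝ)]
      ring
    rw [← hreal, ENNReal.ofReal_mul (by positivity),
      ← ENNReal.ofReal_rpow_of_nonneg (by positivity) (by positivity)]
    norm_cast
  calc eLpNorm' (fun ω => dyadicIncrementSup (Y · ω) m) q P
      ≤ ((2 ^ m : ℕ) : ℝ≥0∞) ^ (1 / q) * (ENNReal.ofReal √(L / 2 ^ m)
          * eLpNorm' id q (gaussianReal 0 1)) := by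
        rw [← card_range (2 ^ m)]
        refine eLpNorm'_finset_sup_le hq (fun j hj => ?_) (fun j hj => ?_)
        · exact (aemeasurable_of_map_neZero (by rw [hlaw j hj]; infer_instance)).enorm
        · rw [eLpNorm'_enorm, eLpNorm'_of_map_eq_gaussianReal hq (hlaw j hj)]
          gcongr
          exact hv j hj
    _ = _ := by rw [← mul_assoc, hcoeff]

lemma lintegral_iSup_enorm_rpow_le [IsProbabilityMeasure P] (hp : 0 < p) (hpq : p ≤ q)
    (hq : 1 ≤ q)
    (hY0 : ∀ᵐ ω ∂P, Y 0 ω = 0) (hYcont : ∀ᵐ ω ∂P, ContinuousOn (Y · ω) (Set.Icc 0 1))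
    (hY : ∀ x ∈ Set.Icc (0 : ℝ) 1, ∀ y ∈ Set.Icc (0 : ℝ) 1, ∃ v : ℝ≥0,
      (v : ℝ) ≤ L * |x - y| ∧ P.map (fun ω => Y x ω - Y y ω) = gaussianReal 0 v) :
    ∫⁻ ω, (⨆ x : Set.Icc (0 : ℝ) 1, ‖Y x ω‖ₑ) ^ p ∂P
      ≤ (ENNReal.ofReal √L * (1 - ENNReal.ofReal ((2 : ℝ) ^ (1 / q - 1 / 2)))⁻¹
          * eLpNorm' id q (gaussianReal 0 1)) ^ p := by
  set G : Ω → ℝ≥0∞ := fun ω => ∑' m, dyadicIncrementSup (Y · ω) m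
  have hsup_le : ∀ᵐ ω ∂P, ⨆ x : Set.Icc (0 : ℝ) 1, ‖Y x ω‖ₑ ≤ G ω := by
    filter_upwards [hY0, hYcont] with ω h0 hcont
    exact iSup_le fun x => enorm_le_tsum_dyadicIncrementSup h0 hcont x.2
  have hq0 : 0 < q := by linarith
  have hmeas := aemeasurable_dyadicIncrementSup hY
  have hGmeas : AEMeasurable G P := AEMeasurable.tsum hmeas
  set r : ℝ := (2 : ℝ) ^ (1 / q - 1 / 2)
  have hr : 0 ≤ r := rpow_nonneg zero_le_two _
  calc ∫⁻ ω, (⨆ x : Set.Icc (0 : ℝ) 1, ‖Y x ω‖ₑ) ^ p ∂P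
      ≤ ∫⁻ ω, G ω ^ p ∂P := lintegral_mono_ae (hsup_le.mono fun ω h => by gcongr)
    _ = eLpNorm' G p P ^ p := lintegral_rpow_enorm_eq_rpow_eLpNorm' (f := G) hp
    _ ≤ eLpNorm' G q P ^ p := by
        gcongr
        exact eLpNorm'_le_eLpNorm'_of_exponent_le hp hpq P hGmeas.aestronglyMeasurable
    _ ≤ (∑' m, ENNReal.ofReal (√L * r ^ m) * eLpNorm' id q (gaussianReal 0 1)) ^ p := by
        gcongr
        exact (eLpNorm'_tsum_le hq hmeas).trans
          (ENNReal.tsum_le_tsum fun m => eLpNorm'_dyadicIncrementSup_le hq0 hY m)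
    _ = _ := by
        have hgeom : ∑' m, ENNReal.ofReal (√L * r ^ m)
            = ENNReal.ofReal √L * (1 - ENNReal.ofReal r)⁻¹ := by
          simp_rw [ENNReal.ofReal_mul (sqrt_nonneg L), ENNReal.ofReal_pow hr,
            ENNReal.tsum_mul_left, ENNReal.tsum_geometric]
        rw [ENNReal.tsum_mul_right, hgeom]

end GaussianIncrements

theorem gaussian_field_sup_moment_bound_general {Ω : Type*} [MeasurableSpace Ω]
    (P : Measure Ω) [IsProbabilityMeasure P]
    (X : ℝ → ℝ → Ω → ℝ) (L : ℝ)
    (hcont : ∀ᵐ ω ∂P,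
      ContinuousOn (fun q : ℝ × ℝ => X q.1 q.2 ω) (Set.Ici 0 ×ˢ Set.Icc 0 1))
    (hbdry : ∀ t : ℝ, 0 ≤ t → ∀ᵐ ω ∂P, X t 0 ω = 0 ∧ X t 1 ω = 0)
    (hgauss : ∀ s t : ℝ, 0 ≤ s → 0 ≤ t → ∀ x ∈ Set.Icc (0 : ℝ) 1, ∀ y ∈ Set.Icc (0 : ℝ) 1,
      ∃ v : NNReal, (v : ℝ) ≤ L * (Real.sqrt |t - s| + |x - y|) ∧
        Measure.map (fun ω => X t x ω - X s y ω) P = gaussianReal 0 v)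
    (p : ℝ) (hp : 1 ≤ p) :
    ∃ C > (0 : ℝ), ∀ t : ℝ, 0 ≤ t →
      (∫⁻ ω, (⨆ x : Set.Icc (0 : ℝ) 1, ENNReal.ofReal |X t x.1 ω|) ^ p ∂P)
        ≤ ENNReal.ofReal C := by
  set q := max p 3
  set B := (ENNReal.ofReal √L * (1 - ENNReal.ofReal ((2 : ℝ) ^ (1 / q - 1 / 2)))⁻¹
    * eLpNorm' id q (gaussianReal 0 1)) ^ p
  have hq : 2 < q := by linarith [le_max_right p 3]
  have hr : (2 : ℝ) ^ (1 / q - 1 / 2) < 1 :=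
    rpow_lt_one_of_one_lt_of_neg one_lt_two
      (by linarith [(one_div_lt_one_div (by linarith) two_pos).2 hq])
  have hB : B ≠ ∞ := by
    refine ENNReal.rpow_ne_top_of_nonneg (by linarith) (ENNReal.mul_ne_top (ENNReal.mul_ne_top
      ENNReal.ofReal_ne_top ?_) (eLpNorm'_id_gaussianReal_lt_top (by linarith) 1).ne)
    exact ENNReal.inv_ne_top.2 (tsub_pos_of_lt (ENNReal.ofReal_lt_one.2 hr)).ne'
  refine ⟨B.toReal + 1, by positivity, fun t ht => ?_⟩
  have hslice : ∀ᵐ ω ∂P, ContinuousOn (X t · ω) (Set.Icc 0 1) := hcont.mono fun ω hω =>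
    hω.comp (Continuous.continuousOn (by fun_prop) (f := fun y => (t, y)))
      fun _ hy => ⟨ht, hy⟩
  have hincr : ∀ x ∈ Set.Icc (0 : ℝ) 1, ∀ y ∈ Set.Icc (0 : ℝ) 1, ∃ v : ℝ≥0,
      (v : ℝ) ≤ L * |x - y| ∧ P.map (fun ω => X t x ω - X t y ω) = gaussianReal 0 v := by
    simpa using hgauss t t ht ht
  calc ∫⁻ ω, (⨆ x : Set.Icc (0 : ℝ) 1, ENNReal.ofReal |X t x.1 ω|) ^ p ∂P
      ≤ B := by
        simpa only [Real.enorm_eq_ofReal_abs] using lintegral_iSup_enorm_rpow_le (by linarith)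
          (le_max_left p 3) (by linarith) ((hbdry t ht).mono fun _ h => h.1) hslice hincr
    _ ≤ ENNReal.ofReal (B.toReal + 1) :=
        (ENNReal.le_ofReal_iff_toReal_le hB (by positivity)).2 (by linarith)

/-- Uniform moment bound for the sup of a continuous centered Gaussian field on
`[0,∞)×[0,1]` with Dirichlet boundary and increment variance bound
`Var(X(t,x) − X(s,y)) ≤ L(√|t−s| + |x−y|)`: for every `p ∈ [1,∞)` there is `C > 0` with
`sup_{t≥0} E[(sup_{x∈[0,1]} |X(t,x)|)^p] ≤ C`. -/
theorem gaussian_field_sup_moment_bound {Ω : Type*} [MeasurableSpace Ω]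
    (P : Measure Ω) [IsProbabilityMeasure P]
    (X : ℝ → ℝ → Ω → ℝ) (L : ℝ) (hL : 0 < L)
    (hcont : ∀ᵐ ω ∂P,
      ContinuousOn (fun q : ℝ × ℝ => X q.1 q.2 ω) (Set.Ici 0 ×ˢ Set.Icc 0 1))
    (hbdry : ∀ t : ℝ, 0 ≤ t → ∀ᵐ ω ∂P, X t 0 ω = 0 ∧ X t 1 ω = 0)
    (hgauss : ∀ s t : ℝ, 0 ≤ s → 0 ≤ t → ∀ x ∈ Set.Icc (0 : ℝ) 1, ∀ y ∈ Set.Icc (0 : ℝ) 1,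
      ∃ v : NNReal, (v : ℝ) ≤ L * (Real.sqrt |t - s| + |x - y|) ∧
        Measure.map (fun ω => X t x ω - X s y ω) P = gaussianReal 0 v)
    (p : ℝ) (hp : 1 ≤ p) :
    ∃ C > (0 : ℝ), ∀ t : ℝ, 0 ≤ t →
      (∫⁻ ω, (⨆ x : Set.Icc (0 : ℝ) 1, ENNReal.ofReal |X t x.1 ω|) ^ p ∂P)
        ≤ ENNReal.ofReal C :=
  gaussian_field_sup_moment_bound_general P X L hcont hbdry hgauss p hp
end
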